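/- The closed-form update W^{τ+1} = W^τ + α_τ V^τ with V^τ = a_τ(a_τ^+ − a_τ^−)^T and α_τ = min{C, L_{W^τ}(a,a^+,a^−)/‖V^τ‖_F²} solves the constrained optimization problem min_W (1/2)‖W − W^τ‖_F² + Cξ subject to L_W(a,a^+,a^−) ≤ ξ, ξ ≥ 0, where L_W is the hinge loss L_W(a,a^+,a^−) = max{0, 1 − a^T W a^+ + a^T W a^−}. -/

import Mathlib

open Matrix Finset

/-!
With the Frobenius inner product, `aᵀ W a⁺ - aᵀ W a⁻ = ⟪V, W⟫`, so the loss is the hinge loss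
`max 0 (1 - ⟪v, w⟫)` of a single vector `v` in a real inner product space. Optimality of the
step is Lagrangian weak duality: for every feasible `(w, ξ)` and `0 ≤ α ≤ C`, completing the
square in `w - w₀ - α v` gives `½‖w - w₀‖² + C ξ ≥ α (1 - ⟪v, w₀⟫) - ½ α² ‖v‖²`, and the
closed-form `α` attains this dual value because it satisfies complementary slackness
`C · max 0 (q - α ‖v‖²) = α (q - α ‖v‖²)`, where `q = 1 - ⟪v, w₀⟫`.
-/

lemma mul_max_zero_sub_eq_of_eq_min {q s C α : ℝ} (hs : 0 < s) (hC : 0 ≤ C)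
    (hα : α = min C (max 0 q / s)) : C * max 0 (q - α * s) = α * (q - α * s) := by
  rcases le_total C (max 0 q / s) with h | h
  · obtain rfl : α = C := hα.trans (min_eq_left h)
    rw [le_div_iff₀ hs] at h
    rcases le_total 0 (q - α * s) with hq | hq
    · rw [max_eq_right hq]
    · rw [max_eq_left hq]
      rcases max_cases 0 q with ⟨hmax, -⟩ | ⟨hmax, -⟩ <;> rw [hmax] at h <;> nlinarith
  · rw [min_eq_right h] at hα
    have hαs : α * s = max 0 q := by rw [hα]; field_simp
    rw [hαs, max_eq_left (sub_nonpos.mpr (le_max_right 0 q)), hα]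
    rcases max_cases 0 q with ⟨hmax, -⟩ | ⟨hmax, -⟩ <;> simp [hmax]

section HingeLoss

variable {E : Type*} [NormedAddCommGroup E] [InnerProductSpace ℝ E]

def hingeLoss (v w : E) : ℝ := max 0 (1 - inner ℝ v w)

lemma hingeLoss_nonneg (v w : E) : 0 ≤ hingeLoss v w := le_max_left _ _

lemma hingeLoss_weak_duality (v w₀ w : E) {C α ξ : ℝ} (hα₀ : 0 ≤ α) (hαC : α ≤ C)
    (hw : hingeLoss v w ≤ ξ) (hξ : 0 ≤ ξ) :
    α * (1 - inner ℝ v w₀) - (1 / 2) * (α ^ 2 * ‖v‖ ^ 2)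
      ≤ (1 / 2) * ‖w - w₀‖ ^ 2 + C * ξ := by
  have hmargin : α * (1 - inner ℝ v w) ≤ C * ξ :=
    calc α * (1 - inner ℝ v w) ≤ α * ξ :=
          mul_le_mul_of_nonneg_left ((le_max_right _ _).trans hw) hα₀
      _ ≤ C * ξ := mul_le_mul_of_nonneg_right hαC hξ
  have hsq : 0 ≤ ‖w - w₀ - α • v‖ ^ 2 := sq_nonneg _
  rw [norm_sub_sq_real, inner_smul_right, norm_smul, mul_pow, Real.norm_eq_abs, sq_abs,
    real_inner_comm, inner_sub_right] at hsq
  linarith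

lemma hingeLoss_update_objective {v : E} (hv : v ≠ 0) (w₀ : E) {C α : ℝ} (hC : 0 ≤ C)
    (hα : α = min C (hingeLoss v w₀ / ‖v‖ ^ 2)) :
    (1 / 2) * ‖α • v‖ ^ 2 + C * hingeLoss v (w₀ + α • v)
      = α * (1 - inner ℝ v w₀) - (1 / 2) * (α ^ 2 * ‖v‖ ^ 2) := by
  have hslack := mul_max_zero_sub_eq_of_eq_min (pow_pos (norm_pos_iff.mpr hv) 2) hC hα
  have hstep : hingeLoss v (w₀ + α • v) = max 0 (1 - inner ℝ v w₀ - α * ‖v‖ ^ 2) := by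
    rw [hingeLoss, inner_add_right, inner_smul_right, real_inner_self_eq_norm_sq,
      sub_add_eq_sub_sub]
  rw [hstep, hslack, norm_smul, mul_pow, Real.norm_eq_abs, sq_abs]
  ring

theorem hingeLoss_update_optimal {v : E} (hv : v ≠ 0) (w₀ : E) {C α : ℝ} (hC : 0 ≤ C)
    (hα : α = min C (hingeLoss v w₀ / ‖v‖ ^ 2)) (w : E) {ξ : ℝ}
    (hw : hingeLoss v w ≤ ξ) (hξ : 0 ≤ ξ) :
    (1 / 2) * ‖α • v‖ ^ 2 + C * hingeLoss v (w₀ + α • v)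
      ≤ (1 / 2) * ‖w - w₀‖ ^ 2 + C * ξ := by
  have hα₀ : 0 ≤ α := hα ▸ le_min hC (div_nonneg (hingeLoss_nonneg v w₀) (sq_nonneg _))
  rw [hingeLoss_update_objective hv w₀ hC hα]
  exact hingeLoss_weak_duality v w₀ w hα₀ (hα ▸ min_le_left _ _) hw hξ

end HingeLoss

namespace Matrix

variable {m n : Type*} [Fintype m] [Fintype n]

/-- Matrices carry no inner product instance; this flattening realises the Frobenius one. -/
noncomputable def toEuclideanFlat : Matrix m n ℝ ≃ₗ[ℝ] EuclideanSpace ℝ (m × n) :=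
  (ofLinearEquiv ℝ).symm.trans (LinearEquiv.curry ℝ ℝ m n).symm |>.trans
    (WithLp.linearEquiv 2 ℝ (m × n → ℝ)).symm

lemma inner_toEuclideanFlat (A B : Matrix m n ℝ) :
    inner ℝ (toEuclideanFlat A) (toEuclideanFlat B) = ∑ i, ∑ j, A i j * B i j := by
  simp [toEuclideanFlat, PiLp.inner_apply, Fintype.sum_prod_type, mul_comm]

lemma norm_toEuclideanFlat_sq (A : Matrix m n ℝ) :
    ‖toEuclideanFlat A‖ ^ 2 = ∑ i, ∑ j, A i j ^ 2 := by
  rw [← real_inner_self_eq_norm_sq, inner_toEuclideanFlat]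
  simp only [sq]

lemma dotProduct_mulVec_eq_inner_toEuclideanFlat (a : m → ℝ) (b : n → ℝ)
    (W : Matrix m n ℝ) :
    a ⬝ᵥ W *ᵥ b = inner ℝ (toEuclideanFlat (vecMulVec a b)) (toEuclideanFlat W) := by
  simp only [inner_toEuclideanFlat, dotProduct, mulVec, vecMulVec_apply, mul_sum]
  exact sum_congr rfl fun i _ => sum_congr rfl fun j _ => by ring

end Matrix

theorem stmt_5_general {m : ℕ} (Wτ : Matrix (Fin m) (Fin m) ℝ)
    (a ap am : Fin m → ℝ) (C : ℝ) (hC : 0 < C)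
    (V : Matrix (Fin m) (Fin m) ℝ)
    (hV : ∀ i j, V i j = a i * (ap j - am j)) (hVne : V ≠ 0)
    (L : Matrix (Fin m) (Fin m) ℝ → ℝ)
    (hL : ∀ W, L W = max 0 (1 - a ⬝ᵥ W.mulVec ap + a ⬝ᵥ W.mulVec am))
    (α : ℝ) (hα : α = min C (L Wτ / ∑ i, ∑ j, (V i j) ^ 2)) :
    0 ≤ L (Wτ + α • V) ∧
    ∀ (W : Matrix (Fin m) (Fin m) ℝ) (ξ : ℝ), L W ≤ ξ → 0 ≤ ξ →
      (1 / 2) * (∑ i, ∑ j, ((Wτ + α • V - Wτ) i j) ^ 2) + C * L (Wτ + α • V)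
        ≤ (1 / 2) * (∑ i, ∑ j, ((W - Wτ) i j) ^ 2) + C * ξ := by
  have hV_eq : V = vecMulVec a ap - vecMulVec a am := by
    ext i j
    simp [hV, vecMulVec_apply, mul_sub]
  have hL_eq : ∀ W, L W = hingeLoss (toEuclideanFlat V) (toEuclideanFlat W) := fun W => by
    rw [hL, sub_add, hingeLoss, hV_eq, map_sub, inner_sub_left,
      ← dotProduct_mulVec_eq_inner_toEuclideanFlat,
      ← dotProduct_mulVec_eq_inner_toEuclideanFlat]
  refine ⟨hL_eq _ ▸ hingeLoss_nonneg _ _, fun W ξ hW hξ => ?_⟩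
  have hopt := hingeLoss_update_optimal (toEuclideanFlat.map_ne_zero_iff.mpr hVne)
    (toEuclideanFlat Wτ) (α := α) hC.le (by rw [hα, hL_eq, norm_toEuclideanFlat_sq])
    (toEuclideanFlat W) (hL_eq W ▸ hW) hξ
  rw [← map_smul, ← map_add, ← map_sub, norm_toEuclideanFlat_sq, norm_toEuclideanFlat_sq,
    ← hL_eq] at hopt
  simpa only [add_sub_cancel_left] using hopt

/-- The closed-form Passive-Aggressive update `W' = Wτ + α • V`, with
`V = a (a⁺ - a⁻)ᵀ` and `α = min{C, L_{Wτ}/‖V‖_F²}`, solves the constrained problem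
`min_{W,ξ} (1/2)‖W - Wτ‖_F² + Cξ` subject to `L_W ≤ ξ`, `ξ ≥ 0`, where
`L_W = max{0, 1 - aᵀW a⁺ + aᵀW a⁻}`. -/
theorem stmt_5 {m : ℕ} (Wτ : Matrix (Fin m) (Fin m) ℝ)
    (a ap am : Fin m → ℝ) (C : ℝ) (hC : 0 < C)
    (ha : a ≠ 0) (hapm : ap ≠ am)
    (V : Matrix (Fin m) (Fin m) ℝ)
    (hV : ∀ i j, V i j = a i * (ap j - am j)) (hVne : V ≠ 0)
    (L : Matrix (Fin m) (Fin m) ℝ → ℝ)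
    (hL : ∀ W, L W = max 0 (1 - a ⬝ᵥ W.mulVec ap + a ⬝ᵥ W.mulVec am))
    (α : ℝ) (hα : α = min C (L Wτ / ∑ i, ∑ j, (V i j) ^ 2)) :
    0 ≤ L (Wτ + α • V) ∧
    ∀ (W : Matrix (Fin m) (Fin m) ℝ) (ξ : ℝ), L W ≤ ξ → 0 ≤ ξ →
      (1 / 2) * (∑ i, ∑ j, ((Wτ + α • V - Wτ) i j) ^ 2) + C * L (Wτ + α • V)
        ≤ (1 / 2) * (∑ i, ∑ j, ((W - Wτ) i j) ^ 2) + C * ξ :=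
  stmt_5_general Wτ a ap am C hC V hV hVne L hL α hα
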